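/- Let n ≥ 2 be an integer. Let F : ℝⁿ → ℝⁿ be differentiable everywhere with Jacobian J(x), let x* ∈ ℝⁿ satisfy F(x*) = 0 with J* := J(x*) invertible and c := ‖J*⁻¹‖, and suppose ‖J(x) − J(x*)‖ ≤ M‖x − x*‖ for all x ∈ ℝⁿ, where M > 0. Let x_k ∈ ℝⁿ, B_k ∈ ℝ^{n×n} be generated by the greedy Broyden's method with each B_k invertible. If 48√n c M ‖x₀ − x*‖ + c‖B₀ − J(x₀)‖_F ≤ 1/3, then for all k ≥ 0, c‖B_k − J(x_k)‖_F ≤ e·(1 − 1/n)^{k/2}. -/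

import Mathlib

open Matrix

noncomputable def vecNorm {n : ℕ} (u : Fin n → ℝ) : ℝ := Real.sqrt (∑ i, u i ^ 2)

noncomputable def frobNorm {n : ℕ} (M : Matrix (Fin n) (Fin n) ℝ) : ℝ :=
  Real.sqrt (∑ i, ∑ j, M i j ^ 2)

noncomputable def specNorm {n : ℕ} (M : Matrix (Fin n) (Fin n) ℝ) : ℝ :=
  sSup {r : ℝ | ∃ u : Fin n → ℝ, vecNorm u = 1 ∧ r = vecNorm (M.mulVec u)}

noncomputable def broyd {n : ℕ} (B A : Matrix (Fin n) (Fin n) ℝ) (u : Fin n → ℝ) :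
    Matrix (Fin n) (Fin n) ℝ :=
  B + (∑ i, u i ^ 2)⁻¹ • ((A - B) * Matrix.vecMulVec u u)

noncomputable def matCLM {n : ℕ} (M : Matrix (Fin n) (Fin n) ℝ) :
    (Fin n → ℝ) →L[ℝ] (Fin n → ℝ) :=
  LinearMap.toContinuousLinearMap M.mulVecLin

/-!
Track the potential `Φ(x, B) = c‖B - J x‖_F + 48 √n c M ‖x - x*‖` with `c = ‖J(x*)⁻¹‖`.
With `x⁺ = x - B⁻¹ F x`, the greedy update zeroes the largest column of `B - J(x⁺)`, which removes
at least a `1/n` share of its squared Frobenius norm; so the Frobenius error shrinks by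
`√(1 - 1/n)`, up to the drift `√n M (‖x - x*‖ + ‖x⁺ - x*‖)` of the Jacobian along the step.
As long as `Φ ≤ 1/3`, the mean value inequality `‖F x - J x (x - x*)‖ ≤ 2M‖x - x*‖²` makes the
quasi-Newton step contract the distance to `x*` by `5/9`, which absorbs that drift. Hence `Φ`
decreases geometrically with ratio `√(1 - 1/n)` from `Φ₀ ≤ 1/3`, and `1/3 ≤ e`.
-/

open WithLp

section

variable {n : ℕ}

lemma vecNorm_eq_norm (u : Fin n → ℝ) : vecNorm u = ‖toLp 2 u‖ := by
  simp [vecNorm, EuclideanSpace.norm_eq]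

lemma vecNorm_nonneg (u : Fin n → ℝ) : 0 ≤ vecNorm u := Real.sqrt_nonneg _

lemma vecNorm_sq (u : Fin n → ℝ) : vecNorm u ^ 2 = ∑ i, u i ^ 2 :=
  Real.sq_sqrt (Finset.sum_nonneg fun _ _ => sq_nonneg _)

lemma vecNorm_sub_le (u v : Fin n → ℝ) : vecNorm (u - v) ≤ vecNorm u + vecNorm v := by
  simpa only [vecNorm_eq_norm, toLp_sub] using norm_sub_le _ _

lemma vecNorm_single_one (j : Fin n) : vecNorm (Pi.single j 1 : Fin n → ℝ) = 1 := by
  simp [vecNorm, Pi.single_apply]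

lemma specNorm_eq_norm (A : Matrix (Fin n) (Fin n) ℝ) :
    specNorm A = ‖toEuclideanCLM (𝕜 := ℝ) A‖ := by
  rw [← (toEuclideanCLM (𝕜 := ℝ) A).sSup_sphere_eq_norm, specNorm]
  congr 1
  ext r
  constructor
  · rintro ⟨u, hu, rfl⟩
    exact ⟨toLp 2 u, by simpa [vecNorm_eq_norm] using hu, by simp [vecNorm_eq_norm]⟩
  · rintro ⟨v, hv, rfl⟩
    refine ⟨ofLp v, by simpa [vecNorm_eq_norm] using hv, ?_⟩
    rw [vecNorm_eq_norm, ← toEuclideanCLM_toLp, toLp_ofLp]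

lemma specNorm_nonneg (A : Matrix (Fin n) (Fin n) ℝ) : 0 ≤ specNorm A := by
  rw [specNorm_eq_norm]; exact norm_nonneg _

lemma specNorm_sub_le (A B : Matrix (Fin n) (Fin n) ℝ) :
    specNorm (A - B) ≤ specNorm A + specNorm B := by
  simpa only [specNorm_eq_norm, map_sub] using norm_sub_le _ _

lemma vecNorm_mulVec_le_specNorm (A : Matrix (Fin n) (Fin n) ℝ) (u : Fin n → ℝ) :
    vecNorm (A *ᵥ u) ≤ specNorm A * vecNorm u := by
  simpa only [vecNorm_eq_norm, specNorm_eq_norm, toEuclideanCLM_toLp] using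
    (toEuclideanCLM (𝕜 := ℝ) A).le_opNorm (toLp 2 u)

lemma frobNorm_nonneg (A : Matrix (Fin n) (Fin n) ℝ) : 0 ≤ frobNorm A :=
  Real.sqrt_nonneg _

section Frobenius

attribute [local instance] Matrix.frobeniusNormedAddCommGroup

lemma frobNorm_eq_norm (A : Matrix (Fin n) (Fin n) ℝ) : frobNorm A = ‖A‖ := by
  simp [frobNorm, Matrix.frobenius_norm_def, Real.sqrt_eq_rpow, sq_abs]

lemma frobNorm_sub_le (A B C : Matrix (Fin n) (Fin n) ℝ) :
    frobNorm (A - C) ≤ frobNorm (A - B) + frobNorm (B - C) := by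
  simpa only [frobNorm_eq_norm] using norm_sub_le_norm_sub_add_norm_sub A B C

lemma frobNorm_sub_comm (A B : Matrix (Fin n) (Fin n) ℝ) :
    frobNorm (A - B) = frobNorm (B - A) := by
  simpa only [frobNorm_eq_norm] using norm_sub_rev A B

end Frobenius

lemma frobNorm_sq_eq_sum_col (A : Matrix (Fin n) (Fin n) ℝ) :
    frobNorm A ^ 2 = ∑ j, vecNorm (A *ᵥ Pi.single j 1) ^ 2 := by
  rw [frobNorm, Real.sq_sqrt (by positivity), Finset.sum_comm]
  simp [vecNorm_sq]

lemma vecNorm_mulVec_le_frobNorm (A : Matrix (Fin n) (Fin n) ℝ) (u : Fin n → ℝ) :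
    vecNorm (A *ᵥ u) ≤ frobNorm A * vecNorm u := by
  rw [vecNorm, vecNorm, frobNorm, ← Real.sqrt_mul (by positivity), Finset.sum_mul]
  gcongr with i
  exact Finset.sum_mul_sq_le_sq_mul_sq Finset.univ (A i) u

lemma frobNorm_le_sqrt_mul_specNorm (A : Matrix (Fin n) (Fin n) ℝ) :
    frobNorm A ≤ √n * specNorm A := by
  refine (pow_le_pow_iff_left₀ (frobNorm_nonneg A) (by positivity [specNorm_nonneg A])
    two_ne_zero).1 ?_
  rw [mul_pow, Real.sq_sqrt n.cast_nonneg, frobNorm_sq_eq_sum_col]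
  calc ∑ j, vecNorm (A *ᵥ Pi.single j 1) ^ 2 ≤ ∑ _j : Fin n, specNorm A ^ 2 := by
        gcongr with j
        · exact vecNorm_nonneg _
        · simpa [vecNorm_single_one] using vecNorm_mulVec_le_specNorm A (Pi.single j 1)
    _ = n * specNorm A ^ 2 := by simp

lemma broyd_sub_mulVec_single (B A : Matrix (Fin n) (Fin n) ℝ) (j l : Fin n) :
    (broyd B A (Pi.single j 1) - A) *ᵥ Pi.single l 1
      = if l = j then 0 else (B - A) *ᵥ Pi.single l 1 := by
  have hj : ∑ i, (Pi.single j 1 : Fin n → ℝ) i ^ 2 = 1 := by simp [Pi.single_apply]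
  rw [broyd, hj, inv_one, one_smul, add_sub_right_comm, Matrix.add_mulVec,
    ← Matrix.mulVec_mulVec, Matrix.vecMulVec_mulVec]
  split_ifs with hl
  · subst hl
    ext i
    simp
  · simp [Ne.symm hl]

lemma frobNorm_broyd_sub_sq (B A : Matrix (Fin n) (Fin n) ℝ) (j : Fin n) :
    frobNorm (broyd B A (Pi.single j 1) - A) ^ 2
      = frobNorm (B - A) ^ 2 - vecNorm ((B - A) *ᵥ Pi.single j 1) ^ 2 := by
  have hcol : ∀ l, vecNorm ((broyd B A (Pi.single j 1) - A) *ᵥ Pi.single l 1) ^ 2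
      = vecNorm ((B - A) *ᵥ Pi.single l 1) ^ 2
        - if l = j then vecNorm ((B - A) *ᵥ Pi.single j 1) ^ 2 else 0 := by
    intro l
    rw [broyd_sub_mulVec_single]
    split_ifs with hl
    · simp [hl, vecNorm]
    · rw [sub_zero]
  simp only [frobNorm_sq_eq_sum_col, hcol, Finset.sum_sub_distrib, Finset.sum_ite_eq',
    Finset.mem_univ, if_true]

theorem frobNorm_broyd_sub_le_of_greedy (B A : Matrix (Fin n) (Fin n) ℝ) (j : Fin n)
    (hj : ∀ i, vecNorm ((B - A) *ᵥ Pi.single i 1) ≤ vecNorm ((B - A) *ᵥ Pi.single j 1)) :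
    frobNorm (broyd B A (Pi.single j 1) - A) ≤ √(1 - 1 / n) * frobNorm (B - A) := by
  have hn : (0 : ℝ) < n := by exact_mod_cast j.pos
  have hcol : frobNorm (B - A) ^ 2 / n ≤ vecNorm ((B - A) *ᵥ Pi.single j 1) ^ 2 := by
    rw [div_le_iff₀' hn, frobNorm_sq_eq_sum_col]
    calc ∑ i, vecNorm ((B - A) *ᵥ Pi.single i 1) ^ 2
        ≤ ∑ _i : Fin n, vecNorm ((B - A) *ᵥ Pi.single j 1) ^ 2 := by
          gcongr with i
          · exact vecNorm_nonneg _
          · exact hj i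
      _ = n * vecNorm ((B - A) *ᵥ Pi.single j 1) ^ 2 := by simp
  rw [← Real.sqrt_sq (frobNorm_nonneg _), ← Real.sqrt_sq (frobNorm_nonneg (B - A)),
    ← Real.sqrt_mul' _ (sq_nonneg _)]
  gcongr
  rw [frobNorm_broyd_sub_sq]
  linarith [show (1 - 1 / n) * frobNorm (B - A) ^ 2
    = frobNorm (B - A) ^ 2 - frobNorm (B - A) ^ 2 / n by ring]

lemma hasFDerivAt_toLp_comp_ofLp {F : (Fin n → ℝ) → (Fin n → ℝ)}
    {A : Matrix (Fin n) (Fin n) ℝ} {x : Fin n → ℝ} (hF : HasFDerivAt F (matCLM A) x) :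
    HasFDerivAt (fun z : EuclideanSpace ℝ (Fin n) => toLp 2 (F (ofLp z)))
      (toEuclideanCLM (𝕜 := ℝ) A) (toLp 2 x) := by
  let e : EuclideanSpace ℝ (Fin n) ≃L[ℝ] (Fin n → ℝ) := PiLp.continuousLinearEquiv 2 ℝ _
  exact (e.symm.hasFDerivAt.comp (toLp 2 x) (hF.comp (toLp 2 x) e.hasFDerivAt)).congr_fderiv
    (ContinuousLinearMap.ext fun _ => rfl)

theorem vecNorm_sub_sub_mulVec_le {F : (Fin n → ℝ) → (Fin n → ℝ)}
    {J : (Fin n → ℝ) → Matrix (Fin n) (Fin n) ℝ} (hF : ∀ x, HasFDerivAt F (matCLM (J x)) x)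
    {xs : Fin n → ℝ} {M : ℝ} (hM : 0 ≤ M)
    (hLip : ∀ x, specNorm (J x - J xs) ≤ M * vecNorm (x - xs)) (y : Fin n → ℝ) :
    vecNorm (F y - F xs - J y *ᵥ (y - xs)) ≤ 2 * M * vecNorm (y - xs) ^ 2 := by
  have hbound : ∀ z ∈ segment ℝ (toLp 2 xs) (toLp 2 y),
      ‖toEuclideanCLM (𝕜 := ℝ) (J (ofLp z)) - toEuclideanCLM (𝕜 := ℝ) (J y)‖
        ≤ 2 * M * vecNorm (y - xs) := by
    intro z hz
    have hzy : vecNorm (ofLp z - xs) ≤ vecNorm (y - xs) := by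
      simpa [vecNorm_eq_norm] using norm_sub_le_of_mem_segment hz
    rw [← map_sub, ← specNorm_eq_norm, ← sub_sub_sub_cancel_right _ _ (J xs)]
    calc specNorm (J (ofLp z) - J xs - (J y - J xs))
        ≤ specNorm (J (ofLp z) - J xs) + specNorm (J y - J xs) := specNorm_sub_le _ _
      _ ≤ M * vecNorm (ofLp z - xs) + M * vecNorm (y - xs) := add_le_add (hLip _) (hLip _)
      _ ≤ 2 * M * vecNorm (y - xs) := by nlinarith
  have h := (convex_segment _ _).norm_image_sub_le_of_norm_hasFDerivWithin_le'
    (fun z _ => (hasFDerivAt_toLp_comp_ofLp (hF (ofLp z))).hasFDerivWithinAt) hbound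
    (left_mem_segment ℝ _ _) (right_mem_segment ℝ _ _)
  simpa [vecNorm_eq_norm, sq, mul_assoc, Matrix.mulVec_sub] using h

section GreedyBroyden

variable {F : (Fin n → ℝ) → (Fin n → ℝ)} {J : (Fin n → ℝ) → Matrix (Fin n) (Fin n) ℝ}
  {xs : Fin n → ℝ} {M : ℝ}

noncomputable def broydenPotential (J : (Fin n → ℝ) → Matrix (Fin n) (Fin n) ℝ)
    (xs : Fin n → ℝ) (M : ℝ) (x : Fin n → ℝ) (B : Matrix (Fin n) (Fin n) ℝ) : ℝ :=
  specNorm (J xs)⁻¹ * frobNorm (B - J x) + 48 * √n * specNorm (J xs)⁻¹ * M * vecNorm (x - xs)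

lemma vecNorm_quasiNewton_sub_le (hF : ∀ x, HasFDerivAt F (matCLM (J x)) x) (hxs : F xs = 0)
    (hJs : IsUnit (J xs)) (hM : 0 ≤ M)
    (hLip : ∀ x, specNorm (J x - J xs) ≤ M * vecNorm (x - xs))
    {x x' : Fin n → ℝ} {B : Matrix (Fin n) (Fin n) ℝ} (hB : IsUnit B)
    (hx' : x' = x - B⁻¹ *ᵥ F x) :
    vecNorm (x' - xs) ≤ specNorm (J xs)⁻¹ * (frobNorm (B - J x) * vecNorm (x - xs)
      + 2 * M * vecNorm (x - xs) ^ 2 + frobNorm (B - J xs) * vecNorm (x' - xs)) := by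
  have hBstep : B *ᵥ (x' - xs)
      = (B - J x) *ᵥ (x - xs) - (F x - F xs - J x *ᵥ (x - xs)) := by
    simp only [hx', hxs, Matrix.sub_mulVec, Matrix.mulVec_sub, Matrix.mulVec_mulVec,
      Matrix.mul_nonsing_inv _ ((Matrix.isUnit_iff_isUnit_det _).1 hB), Matrix.one_mulVec]
    abel
  have hJstep : x' - xs = (J xs)⁻¹ *ᵥ (B *ᵥ (x' - xs) - (B - J xs) *ᵥ (x' - xs)) := by
    rw [← Matrix.sub_mulVec, sub_sub_cancel, Matrix.mulVec_mulVec,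
      Matrix.nonsing_inv_mul _ ((Matrix.isUnit_iff_isUnit_det _).1 hJs), Matrix.one_mulVec]
  calc vecNorm (x' - xs)
      ≤ specNorm (J xs)⁻¹ * vecNorm (B *ᵥ (x' - xs) - (B - J xs) *ᵥ (x' - xs)) := by
        conv_lhs => rw [hJstep]
        exact vecNorm_mulVec_le_specNorm _ _
    _ ≤ _ := by
        gcongr
        · exact specNorm_nonneg _
        refine (vecNorm_sub_le _ _).trans (add_le_add ?_ (vecNorm_mulVec_le_frobNorm _ _))
        rw [hBstep]
        exact (vecNorm_sub_le _ _).trans (add_le_add (vecNorm_mulVec_le_frobNorm _ _)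
          (vecNorm_sub_sub_mulVec_le hF hM hLip x))

lemma frobNorm_jacobian_sub_le (hLip : ∀ x, specNorm (J x - J xs) ≤ M * vecNorm (x - xs))
    (x : Fin n → ℝ) : frobNorm (J x - J xs) ≤ √n * M * vecNorm (x - xs) := by
  rw [mul_assoc]
  exact (frobNorm_le_sqrt_mul_specNorm _).trans (by gcongr; exact hLip x)

lemma vecNorm_quasiNewton_sub_le_of_potential_le (hn : 0 < n)
    (hF : ∀ x, HasFDerivAt F (matCLM (J x)) x) (hxs : F xs = 0) (hJs : IsUnit (J xs))
    (hM : 0 ≤ M) (hLip : ∀ x, specNorm (J x - J xs) ≤ M * vecNorm (x - xs))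
    {x x' : Fin n → ℝ} {B : Matrix (Fin n) (Fin n) ℝ} (hB : IsUnit B)
    (hx' : x' = x - B⁻¹ *ᵥ F x) (hpot : broydenPotential J xs M x B ≤ 1 / 3) :
    vecNorm (x' - xs) ≤ 5 / 9 * vecNorm (x - xs) := by
  have hdist := vecNorm_quasiNewton_sub_le hF hxs hJs hM hLip hB hx'
  have hfrob : frobNorm (B - J xs) ≤ frobNorm (B - J x) + √n * M * vecNorm (x - xs) :=
    (frobNorm_sub_le _ (J x) _).trans (by gcongr; exact frobNorm_jacobian_sub_le hLip x)
  set c := specNorm (J xs)⁻¹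
  set r := vecNorm (x - xs)
  set r' := vecNorm (x' - xs)
  have hc : 0 ≤ c := specNorm_nonneg _
  have hr : 0 ≤ r := vecNorm_nonneg _
  have hr' : 0 ≤ r' := vecNorm_nonneg _
  have hσ : 0 ≤ c * frobNorm (B - J x) := mul_nonneg hc (frobNorm_nonneg _)
  have hsqrt : 1 ≤ √(n : ℝ) := Real.one_le_sqrt.2 (by exact_mod_cast hn)
  have hcMr : 0 ≤ c * M * r := by positivity
  unfold broydenPotential at hpot
  -- `c‖B - J x‖_F ≤ 1/3` and `c M r ≤ √n c M r ≤ 1/144` give `(95/144) r' ≤ (50/144) r`.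
  nlinarith [mul_le_mul_of_nonneg_left hfrob (mul_nonneg hc hr'),
    mul_le_mul_of_nonneg_right hsqrt hcMr]

lemma frobNorm_broyd_sub_jacobian_le (hLip : ∀ x, specNorm (J x - J xs) ≤ M * vecNorm (x - xs))
    {x x' : Fin n → ℝ} {B : Matrix (Fin n) (Fin n) ℝ} {j : Fin n}
    (hj : ∀ i, vecNorm ((B - J x') *ᵥ Pi.single i 1) ≤ vecNorm ((B - J x') *ᵥ Pi.single j 1)) :
    frobNorm (broyd B (J x') (Pi.single j 1) - J x')
      ≤ √(1 - 1 / n) * (frobNorm (B - J x) + √n * M * (vecNorm (x - xs) + vecNorm (x' - xs))) := by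
  refine (frobNorm_broyd_sub_le_of_greedy _ _ _ hj).trans ?_
  gcongr
  calc frobNorm (B - J x')
      ≤ frobNorm (B - J x) + (frobNorm (J x - J xs) + frobNorm (J xs - J x')) :=
        (frobNorm_sub_le _ (J x) _).trans (by gcongr; exact frobNorm_sub_le _ _ _)
    _ ≤ _ := by
        rw [frobNorm_sub_comm (J xs), mul_add]
        gcongr <;> exact frobNorm_jacobian_sub_le hLip _

theorem broydenPotential_succ_le (hn : 2 ≤ n)
    (hF : ∀ x, HasFDerivAt F (matCLM (J x)) x) (hxs : F xs = 0) (hJs : IsUnit (J xs))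
    (hM : 0 ≤ M) (hLip : ∀ x, specNorm (J x - J xs) ≤ M * vecNorm (x - xs))
    {x x' : Fin n → ℝ} {B : Matrix (Fin n) (Fin n) ℝ} {j : Fin n} (hB : IsUnit B)
    (hx' : x' = x - B⁻¹ *ᵥ F x)
    (hj : ∀ i, vecNorm ((B - J x') *ᵥ Pi.single i 1) ≤ vecNorm ((B - J x') *ᵥ Pi.single j 1))
    (hpot : broydenPotential J xs M x B ≤ 1 / 3) :
    broydenPotential J xs M x' (broyd B (J x') (Pi.single j 1))
      ≤ √(1 - 1 / n) * broydenPotential J xs M x B := by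
  have hdist :=
    vecNorm_quasiNewton_sub_le_of_potential_le (by omega) hF hxs hJs hM hLip hB hx' hpot
  have hfrob := frobNorm_broyd_sub_jacobian_le (x := x) hLip hj
  have hs : 3 / 5 ≤ √(1 - 1 / (n : ℝ)) := by
    rw [Real.le_sqrt' (by norm_num)]
    have : (2 : ℝ) ≤ n := by exact_mod_cast hn
    rw [le_sub_comm, div_le_iff₀ (by positivity)]
    nlinarith
  set c := specNorm (J xs)⁻¹
  set s := √(1 - 1 / (n : ℝ))
  set P := √n * c * M
  have hc : 0 ≤ c := specNorm_nonneg _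
  have hP : 0 ≤ P := by positivity
  have hr : 0 ≤ vecNorm (x - xs) := vecNorm_nonneg _
  unfold broydenPotential
  -- The weight 48 is what makes `s + (5/9) (s + 48) ≤ 48 s` hold for `s ≥ 3/5`.
  nlinarith [mul_le_mul_of_nonneg_left hfrob hc, mul_le_mul_of_nonneg_left hdist
    (mul_nonneg hP (by linarith : 0 ≤ s + 48)), mul_nonneg (sub_nonneg.2 hs) (mul_nonneg hP hr)]

end GreedyBroyden

end

theorem greedy_broyden_jacobian_convergence {n : ℕ} (hn : 2 ≤ n)
    (F : (Fin n → ℝ) → (Fin n → ℝ))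
    (J : (Fin n → ℝ) → Matrix (Fin n) (Fin n) ℝ)
    (hF : ∀ x, HasFDerivAt F (matCLM (J x)) x)
    (xs : Fin n → ℝ) (hxs : F xs = 0) (hJs : IsUnit (J xs))
    (c : ℝ) (hc : c = specNorm (J xs)⁻¹)
    (M : ℝ) (hM : 0 < M)
    (hLip : ∀ x, specNorm (J x - J xs) ≤ M * vecNorm (x - xs))
    (x : ℕ → (Fin n → ℝ)) (B : ℕ → Matrix (Fin n) (Fin n) ℝ) (idx : ℕ → Fin n)
    (hBinv : ∀ k, IsUnit (B k))
    (hxrec : ∀ k, x (k + 1) = x k - (B k)⁻¹.mulVec (F (x k)))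
    (hgreedy : ∀ k, ∀ i : Fin n,
      vecNorm ((B k - J (x (k + 1))).mulVec (Pi.single i 1))
        ≤ vecNorm ((B k - J (x (k + 1))).mulVec (Pi.single (idx k) 1)))
    (hBrec : ∀ k, B (k + 1) = broyd (B k) (J (x (k + 1))) (Pi.single (idx k) 1))
    (hinit : 48 * Real.sqrt n * c * M * vecNorm (x 0 - xs)
      + c * frobNorm (B 0 - J (x 0)) ≤ 1 / 3) :
    ∀ k : ℕ, c * frobNorm (B k - J (x k))
      ≤ Real.exp 1 * (1 - 1 / (n : ℝ)) ^ ((k : ℝ) / 2) := by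
  subst hc
  have hq : 0 ≤ 1 - 1 / (n : ℝ) := by
    rw [sub_nonneg, div_le_one (by positivity)]; exact_mod_cast (by omega : 1 ≤ n)
  set s := √(1 - 1 / (n : ℝ)) with hs_def
  have hs : 0 ≤ s := Real.sqrt_nonneg _
  have hs1 : s ≤ 1 := Real.sqrt_le_one.2 (by linarith [show 0 ≤ 1 / (n : ℝ) by positivity])
  have hpot : ∀ k, broydenPotential J xs M (x k) (B k) ≤ 1 / 3 * s ^ k := by
    intro k
    induction k with
    | zero => unfold broydenPotential; linarith
    | succ k ih =>
      have hsmall : broydenPotential J xs M (x k) (B k) ≤ 1 / 3 :=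
        ih.trans (by nlinarith [pow_le_one₀ (n := k) hs hs1])
      calc broydenPotential J xs M (x (k + 1)) (B (k + 1))
          ≤ s * broydenPotential J xs M (x k) (B k) := by
            rw [hBrec]
            exact broydenPotential_succ_le hn hF hxs hJs hM.le hLip (hBinv k) (hxrec k)
              (hgreedy k) hsmall
        _ ≤ 1 / 3 * s ^ (k + 1) := by rw [pow_succ]; nlinarith
  intro k
  calc specNorm (J xs)⁻¹ * frobNorm (B k - J (x k)) ≤ broydenPotential J xs M (x k) (B k) :=
        le_add_of_nonneg_right (by
          have := specNorm_nonneg (J xs)⁻¹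
          have := vecNorm_nonneg (x k - xs)
          positivity)
    _ ≤ 1 / 3 * s ^ k := hpot k
    _ ≤ Real.exp 1 * s ^ k := by gcongr; linarith [Real.add_one_le_exp 1]
    _ = _ := by
        rw [hs_def, Real.sqrt_eq_rpow, ← Real.rpow_natCast, ← Real.rpow_mul hq]
        ring_nf
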